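/- arXiv:1711.08107 — 3 statements merged into one kernel-verified Lean document; each statement's English description precedes it below -/
import Mathlib

section
/- For all n ≥ 1 and k ≥ 2, f(n,k) ≤ 2^⌈n/k⌉ · f(n), where f(n) is the number of primitive subsets of {1,...,n} and f(n,k) is the number of k-core subsets of {1,...,n}. -/
open Finset Filter
open scoped Classical

/-- A finite set of naturals is primitive: no element divides another distinct element. -/
def Primitive (S : Finset ℕ) : Prop := ∀ a ∈ S, ∀ b ∈ S, a ≠ b → ¬ a ∣ b

/-- `f n` is the number of primitive subsets of `{1,...,n}`. -/
noncomputable def f (n : ℕ) : ℕ :=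
  ((Finset.Icc 1 n).powerset.filter Primitive).card

/-- A natural is `k`-smooth: all its prime factors are at most the `k`-th prime. -/
def SmoothNat (k m : ℕ) : Prop := ∀ p, p.Prime → p ∣ m → p ≤ Nat.nth Nat.Prime (k - 1)

/-- A set is `k`-core: no two distinct elements `a ∣ b` with `b/a` having all
prime factors at most the `k`-th prime. -/
def KCore (k : ℕ) (S : Finset ℕ) : Prop :=
  ∀ a ∈ S, ∀ b ∈ S, a ≠ b → ¬ (a ∣ b ∧ SmoothNat k (b / a))

/-- `fk n k` is the number of `k`-core subsets of `{1,...,n}`. -/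
noncomputable def fk (n k : ℕ) : ℕ :=
  ((Finset.Icc 1 n).powerset.filter (KCore k)).card

/-- `Dk k` is the product of the first `k` primes. -/
noncomputable def Dk (k : ℕ) : ℕ := ∏ i ∈ Finset.range k, Nat.nth Nat.Prime i

/-- `Pk k x` is the number of primitive subsets of the set of `k`-smooth integers in `{1,...,x}`. -/
noncomputable def Pk (k x : ℕ) : ℕ :=
  (((Finset.Icc 1 x).filter (SmoothNat k)).powerset.filter Primitive).card

/-!
Split a `k`-core set `S ⊆ {1,…,n}` into its small part `S ∩ {1,…,⌊n/k⌋}` and its large part.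
Two large elements `a ∣ b` have `b / a ≤ n / a < k`, and every positive integer below `k` is
`k`-smooth because the `k`-th prime is at least `k`; so the large part is primitive. The pair of
parts determines `S`, which gives `f(n,k) ≤ 2^⌊n/k⌋ · f(n)`.
-/

theorem smoothNat_of_pos_of_lt {k m : ℕ} (hm : 0 < m) (hmk : m < k) : SmoothNat k m := by
  intro p _ hpm
  have hpm_le : p ≤ m := Nat.le_of_dvd hm hpm
  have hk_le : k - 1 ≤ Nat.nth Nat.Prime (k - 1) :=
    (Nat.nth_strictMono Nat.infinite_setOfPred_prime).le_apply
  omega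

theorem card_filter_powerset_le_two_pow_mul {α : Type*} [DecidableEq α] (s t : Finset α)
    {P Q : Finset α → Prop} [DecidablePred P] [DecidablePred Q]
    (h : ∀ S ⊆ s, P S → Q (S \ t)) :
    #{S ∈ s.powerset | P S} ≤ 2 ^ #t * #{S ∈ s.powerset | Q S} := by
  calc #{S ∈ s.powerset | P S}
      ≤ #(t.powerset ×ˢ {S ∈ s.powerset | Q S}) := by
        refine card_le_card_of_injOn (fun S => (S ∩ t, S \ t)) ?_ ?_
        · intro S hS
          simp only [coe_filter, mem_powerset, Set.mem_ofPred_eq] at hS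
          simp only [coe_product, coe_powerset, coe_filter, mem_powerset, Set.mem_prod,
            Set.mem_preimage, Set.mem_powerset_iff, coe_subset, Set.mem_ofPred_eq]
          exact ⟨inter_subset_right, sdiff_subset.trans hS.1, h S hS.1 hS.2⟩
        · intro S _ T _ hST
          simp only [Prod.mk.injEq] at hST
          rw [← sup_inf_sdiff S t, ← sup_inf_sdiff T t]
          exact congrArg₂ (· ⊔ ·) hST.1 hST.2
    _ = 2 ^ #t * #{S ∈ s.powerset | Q S} := by rw [card_product, card_powerset]

theorem KCore.primitive_sdiff_Icc {k n : ℕ} {S : Finset ℕ} (hk : 0 < k) (hS : S ⊆ Icc 1 n)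
    (hcore : KCore k S) : Primitive (S \ Icc 1 (n / k)) := by
  intro a ha b hb hab hdvd
  obtain ⟨haS, ha_large⟩ := mem_sdiff.mp ha
  have hbS : b ∈ S := (mem_sdiff.mp hb).1
  have ha_pos : 0 < a := (mem_Icc.mp (hS haS)).1
  obtain ⟨hb_pos, hbn⟩ := mem_Icc.mp (hS hbS)
  have hna : n / k < a := by
    simp only [mem_Icc, not_and, not_le] at ha_large
    exact ha_large ha_pos
  have hquot_lt : b / a < k := by
    rw [Nat.div_lt_iff_lt_mul ha_pos]
    have := (Nat.div_lt_iff_lt_mul hk).mp hna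
    linarith
  have hquot_pos : 0 < b / a := Nat.div_pos (Nat.le_of_dvd hb_pos hdvd) ha_pos
  exact hcore a haS b hbS hab ⟨hdvd, smoothNat_of_pos_of_lt hquot_pos hquot_lt⟩

theorem stmt_4_general (n k : ℕ) (hk : 2 ≤ k) :
    fk n k ≤ 2 ^ ((n + k - 1) / k) * f n := by
  calc fk n k ≤ 2 ^ #(Icc 1 (n / k)) * f n :=
        card_filter_powerset_le_two_pow_mul _ _ fun _ hS hcore =>
          KCore.primitive_sdiff_Icc (by omega) hS hcore
    _ ≤ 2 ^ ((n + k - 1) / k) * f n := by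
        rw [Nat.card_Icc, Nat.add_sub_cancel]
        gcongr
        · norm_num
        · omega

/-- For all `n ≥ 1` and `k ≥ 2`, `f(n,k) ≤ 2 ^ ⌈n/k⌉ * f(n)`. -/
theorem stmt_4 (n k : ℕ) (hn : 1 ≤ n) (hk : 2 ≤ k) :
    fk n k ≤ 2 ^ ((n + k - 1) / k) * f n :=
  stmt_4_general n k hk
end

section
/- For fixed k, f(n,k) = ∏_{R ≤ n, gcd(R,D)=1} P_k(⌊n/R⌋), where the product is over positive integers R ≤ n coprime to D = p_1···p_k. -/
open Finset Filter
open scoped Classical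

/-! ### Auxiliary definitions: smooth and rough parts -/

noncomputable def Pval (k : ℕ) : ℕ := Nat.nth Nat.Prime (k - 1)

noncomputable def smPart (k m : ℕ) : ℕ :=
  ∏ p ∈ m.primeFactors.filter (fun p => p ≤ Pval k), p ^ m.factorization p
noncomputable def rfPart (k m : ℕ) : ℕ :=
  ∏ p ∈ m.primeFactors.filter (fun p => ¬ p ≤ Pval k), p ^ m.factorization p

lemma smPart_mul_rfPart (k : ℕ) {m : ℕ} (hm : m ≠ 0) : smPart k m * rfPart k m = m := by
  rw [smPart, rfPart, Finset.prod_filter_mul_prod_filter_not]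
  conv_rhs => rw [← Nat.factorization_prod_pow_eq_self hm]
  rw [Finsupp.prod, Nat.support_factorization]

lemma smPart_pos (k m : ℕ) : 0 < smPart k m := by
  apply Finset.prod_pos
  intro p hp
  exact pow_pos (Nat.pos_of_mem_primeFactors (Finset.mem_filter.1 hp).1) _

lemma rfPart_pos (k m : ℕ) : 0 < rfPart k m := by
  apply Finset.prod_pos
  intro p hp
  exact pow_pos (Nat.pos_of_mem_primeFactors (Finset.mem_filter.1 hp).1) _

lemma smooth_smPart (k m : ℕ) : SmoothNat k (smPart k m) := by
  intro p hp hdvd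
  rw [smPart] at hdvd
  obtain ⟨q, hq, hpq⟩ := (hp.prime.dvd_finset_prod_iff _).1 hdvd
  obtain ⟨hq1, hq2⟩ := Finset.mem_filter.1 hq
  have : p = q := (Nat.prime_dvd_prime_iff_eq hp (Nat.prime_of_mem_primeFactors hq1)).1
    (hp.prime.dvd_of_dvd_pow hpq)
  exact this ▸ hq2

lemma prime_dvd_Dk_iff {k : ℕ} (hk : 1 ≤ k) {p : ℕ} (hp : p.Prime) :
    p ∣ Dk k ↔ p ≤ Pval k := by
  constructor
  · intro h
    obtain ⟨i, hi, hpi⟩ := (hp.prime.dvd_finset_prod_iff _).1 h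
    have : p = Nat.nth Nat.Prime i :=
      (Nat.prime_dvd_prime_iff_eq hp (Nat.prime_nth_prime i)).1 hpi
    rw [this, Pval]
    exact (Nat.nth_strictMono Nat.infinite_setOf_prime).monotone
      (Nat.le_sub_one_of_lt (Finset.mem_range.1 hi))
  · intro h
    have h1 : Nat.nth Nat.Prime (Nat.count Nat.Prime p) = p := Nat.nth_count hp
    have h2 : Nat.count Nat.Prime p ≤ k - 1 := by
      by_contra hc
      push_neg at hc
      have := Nat.nth_strictMono Nat.infinite_setOf_prime hc
      rw [h1] at this
      exact absurd h (not_le.2 this)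
    have h3 : Nat.count Nat.Prime p < k := lt_of_le_of_lt h2 (Nat.sub_lt hk one_pos)
    calc p = Nat.nth Nat.Prime (Nat.count Nat.Prime p) := h1.symm
    _ ∣ Dk k := Finset.dvd_prod_of_mem _ (Finset.mem_range.2 h3)

lemma coprime_rfPart {k : ℕ} (hk : 1 ≤ k) (m : ℕ) : Nat.Coprime (rfPart k m) (Dk k) := by
  by_contra hc
  obtain ⟨p, hp, hp1, hp2⟩ := Nat.Prime.not_coprime_iff_dvd.1 hc
  rw [rfPart] at hp1
  obtain ⟨q, hq, hpq⟩ := (hp.prime.dvd_finset_prod_iff _).1 hp1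
  obtain ⟨hq1, hq2⟩ := Finset.mem_filter.1 hq
  have : p = q := (Nat.prime_dvd_prime_iff_eq hp (Nat.prime_of_mem_primeFactors hq1)).1
    (hp.prime.dvd_of_dvd_pow hpq)
  exact hq2 (this ▸ (prime_dvd_Dk_iff hk hp).1 hp2)

lemma smooth_dvd {k d m : ℕ} (hm : SmoothNat k m) (hd : d ∣ m) : SmoothNat k d :=
  fun p hp hpd => hm p hp (hpd.trans hd)

lemma smoothNat_mul {k s t : ℕ} (hs : SmoothNat k s) (ht : SmoothNat k t) :
    SmoothNat k (s * t) := by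
  intro p hp hdvd
  rcases (Nat.Prime.dvd_mul hp).1 hdvd with h | h
  · exact hs p hp h
  · exact ht p hp h

lemma smooth_coprime {k s R : ℕ} (hk : 1 ≤ k) (hs : SmoothNat k s)
    (hR : Nat.Coprime R (Dk k)) : Nat.Coprime s R := by
  by_contra hc
  obtain ⟨p, hp, hp1, hp2⟩ := Nat.Prime.not_coprime_iff_dvd.1 hc
  exact Nat.Prime.not_coprime_iff_dvd.2 ⟨p, hp, hp2, (prime_dvd_Dk_iff hk hp).2 (hs p hp hp1)⟩ hR

lemma decomp_unique {k s₁ R₁ s₂ R₂ : ℕ} (hk : 1 ≤ k)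
    (hs₁ : SmoothNat k s₁) (hs₂ : SmoothNat k s₂)
    (hR₁ : Nat.Coprime R₁ (Dk k)) (hR₂ : Nat.Coprime R₂ (Dk k))
    (h0 : s₁ * R₁ ≠ 0) (heq : s₁ * R₁ = s₂ * R₂) : s₁ = s₂ ∧ R₁ = R₂ := by
  have hs₁0 : s₁ ≠ 0 := fun h => h0 (by simp [h])
  have c12 : Nat.Coprime s₁ R₂ := smooth_coprime hk hs₁ hR₂
  have c21 : Nat.Coprime s₂ R₁ := smooth_coprime hk hs₂ hR₁
  have d1 : s₁ ∣ s₂ := c12.dvd_of_dvd_mul_right (heq ▸ Dvd.intro R₁ rfl)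
  have d2 : s₂ ∣ s₁ := c21.dvd_of_dvd_mul_right (heq.symm ▸ Dvd.intro R₂ rfl)
  have hs : s₁ = s₂ := Nat.dvd_antisymm d1 d2
  refine ⟨hs, ?_⟩
  subst hs
  exact Nat.eq_of_mul_eq_mul_left (Nat.pos_of_ne_zero hs₁0) heq

lemma decomp_eq {k s R : ℕ} (hk : 1 ≤ k) (hs : SmoothNat k s)
    (hR : Nat.Coprime R (Dk k)) (hs0 : s ≠ 0) (hR0 : R ≠ 0) :
    smPart k (s * R) = s ∧ rfPart k (s * R) = R := by
  have h0 : s * R ≠ 0 := mul_ne_zero hs0 hR0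
  exact decomp_unique hk (smooth_smPart k (s*R)) hs (coprime_rfPart hk _) hR
    (by rw [smPart_mul_rfPart k h0]; exact h0) (smPart_mul_rfPart k h0)

lemma core_iff {k a b : ℕ} (hk : 1 ≤ k) (ha : a ≠ 0) (hb : b ≠ 0) :
    (a ∣ b ∧ SmoothNat k (b / a)) ↔
      (rfPart k a = rfPart k b ∧ smPart k a ∣ smPart k b) := by
  constructor
  · rintro ⟨⟨t, rfl⟩, hsm⟩
    have ht : t ≠ 0 := by rintro rfl; simp at hb
    rw [Nat.mul_div_cancel_left _ (Nat.pos_of_ne_zero ha)] at hsm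
    have heq : (smPart k a * t) * rfPart k a = a * t := by
      rw [mul_comm (smPart k a) t, mul_assoc, smPart_mul_rfPart k ha, mul_comm]
    have h2 : smPart k (a * t) = smPart k a * t ∧ rfPart k (a * t) = rfPart k a := by
      have := decomp_unique hk (smoothNat_mul (smooth_smPart k a) hsm)
        (smooth_smPart k (a * t)) (coprime_rfPart hk a) (coprime_rfPart hk (a*t))
        (heq.symm ▸ hb) (heq.trans (smPart_mul_rfPart k hb).symm)
      exact ⟨this.1.symm, this.2.symm⟩
    exact ⟨h2.2.symm, h2.1 ▸ Dvd.intro t rfl⟩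
  · rintro ⟨hr, ⟨c, hc⟩⟩
    have hadvd : a ∣ b := by
      conv_lhs => rw [← smPart_mul_rfPart k ha]
      conv_rhs => rw [← smPart_mul_rfPart k hb]
      exact mul_dvd_mul ⟨c, hc⟩ (hr ▸ dvd_rfl)
    refine ⟨hadvd, ?_⟩
    have hbeq : b = a * c := by
      conv_lhs => rw [← smPart_mul_rfPart k hb, hc, ← hr]
      conv_rhs => rw [← smPart_mul_rfPart k ha]
      ring
    rw [hbeq, Nat.mul_div_cancel_left _ (Nat.pos_of_ne_zero ha)]
    exact smooth_dvd (smooth_smPart k b) ⟨smPart k a, by rw [hc]; ring⟩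

lemma rfPart_dvd (k : ℕ) {m : ℕ} (hm : m ≠ 0) : rfPart k m ∣ m :=
  Dvd.intro_left _ (smPart_mul_rfPart k hm)

lemma div_rfPart (k : ℕ) {m : ℕ} (hm : m ≠ 0) : m / rfPart k m = smPart k m := by
  calc m / rfPart k m = smPart k m * rfPart k m / rfPart k m := by
        rw [smPart_mul_rfPart k hm]
  _ = smPart k m := Nat.mul_div_cancel _ (rfPart_pos k m)

/-- `f(n,k) = ∏_{R ≤ n, gcd(R,Dk)=1} P_k(⌊n/R⌋)`. -/
theorem stmt_10 (n k : ℕ) (hk : 1 ≤ k) :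
    fk n k = ∏ R ∈ (Finset.Icc 1 n).filter (fun R => Nat.Coprime R (Dk k)),
      Pk k (n / R) := by
  classical
  set I := (Finset.Icc 1 n).filter (fun R => Nat.Coprime R (Dk k)) with hI
  set T : ℕ → Finset (Finset ℕ) :=
    fun R => ((Finset.Icc 1 (n / R)).filter (SmoothNat k)).powerset.filter Primitive with hT
  have hrhs : ∏ R ∈ I, Pk k (n / R) = (I.pi T).card := by
    rw [Finset.card_pi]; rfl
  rw [hrhs, fk]
  have hImem : ∀ {R}, R ∈ I → R ≠ 0 ∧ R ≤ n ∧ Nat.Coprime R (Dk k) := by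
    intro R hR
    rw [hI, Finset.mem_filter, Finset.mem_Icc] at hR
    exact ⟨by omega, hR.1.2, hR.2⟩
  have hmemL : ∀ (A : Finset ℕ),
      A ∈ (Finset.Icc 1 n).powerset.filter (KCore k) ↔ (A ⊆ Finset.Icc 1 n ∧ KCore k A) := by
    intro A; rw [Finset.mem_filter, Finset.mem_powerset]
  have hmemT : ∀ (R : ℕ) (S : Finset ℕ), S ∈ T R ↔
      (S ⊆ (Finset.Icc 1 (n / R)).filter (SmoothNat k) ∧ Primitive S) := by
    intro R S; rw [hT, Finset.mem_filter, Finset.mem_powerset]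
  refine Finset.card_bij'
    (fun A _ => fun R _ => (A.filter (fun m => rfPart k m = R)).image (· / R))
    (fun F _ => I.attach.biUnion (fun R => (F R.1 R.2).image (· * R.1))) ?_ ?_ ?_ ?_
  · -- forward maps into pi
    intro A hA
    obtain ⟨hAsub, hAcore⟩ := (hmemL A).1 hA
    rw [Finset.mem_pi]
    intro R hR
    obtain ⟨hR0, hRn, hRcop⟩ := hImem hR
    refine (hmemT R _).2 ⟨?_, ?_⟩
    · intro x hx
      obtain ⟨m, hm, rfl⟩ := Finset.mem_image.1 hx
      obtain ⟨hmA, hmrf⟩ := Finset.mem_filter.1 hm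
      obtain ⟨hm1, hmn⟩ := Finset.mem_Icc.1 (hAsub hmA)
      have hm0 : m ≠ 0 := by omega
      rw [← hmrf, div_rfPart k hm0]
      refine Finset.mem_filter.2 ⟨Finset.mem_Icc.2 ⟨smPart_pos k m, ?_⟩, smooth_smPart k m⟩
      rw [Nat.le_div_iff_mul_le (rfPart_pos k m), smPart_mul_rfPart k hm0]
      exact hmn
    · intro a ha b hb hab hdvd
      obtain ⟨m₁, hm₁, rfl⟩ := Finset.mem_image.1 ha
      obtain ⟨m₂, hm₂, rfl⟩ := Finset.mem_image.1 hb
      obtain ⟨hm₁A, hm₁rf⟩ := Finset.mem_filter.1 hm₁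
      obtain ⟨hm₂A, hm₂rf⟩ := Finset.mem_filter.1 hm₂
      obtain ⟨h11, h12⟩ := Finset.mem_Icc.1 (hAsub hm₁A)
      obtain ⟨h21, h22⟩ := Finset.mem_Icc.1 (hAsub hm₂A)
      have h10 : m₁ ≠ 0 := by omega
      have h20 : m₂ ≠ 0 := by omega
      have hne : m₁ ≠ m₂ := by rintro rfl; exact hab rfl
      refine hAcore m₁ hm₁A m₂ hm₂A hne ?_
      refine (core_iff hk h10 h20).2 ⟨hm₁rf.trans hm₂rf.symm, ?_⟩
      rw [← div_rfPart k h10, ← div_rfPart k h20, hm₁rf, hm₂rf]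
      exact hdvd
  · -- backward maps into filtered powerset
    intro F hF
    rw [Finset.mem_pi] at hF
    have hFmem : ∀ (R : ℕ) (hR : R ∈ I) {s}, s ∈ F R hR →
        (s ≠ 0 ∧ s ≤ n / R ∧ SmoothNat k s) := by
      intro R hR s hs
      obtain ⟨h1, -⟩ := (hmemT R _).1 (hF R hR)
      obtain ⟨h2, h3⟩ := Finset.mem_filter.1 (h1 hs)
      obtain ⟨h4, h5⟩ := Finset.mem_Icc.1 h2
      exact ⟨by omega, h5, h3⟩
    refine (hmemL _).2 ⟨?_, ?_⟩
    · intro m hm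
      obtain ⟨R, -, hm2⟩ := Finset.mem_biUnion.1 hm
      obtain ⟨s, hs, rfl⟩ := Finset.mem_image.1 hm2
      obtain ⟨hs0, hsle, -⟩ := hFmem R.1 R.2 hs
      obtain ⟨hR0, -, -⟩ := hImem R.2
      refine Finset.mem_Icc.2 ⟨Nat.one_le_iff_ne_zero.2 (mul_ne_zero hs0 hR0), ?_⟩
      exact (Nat.le_div_iff_mul_le (Nat.pos_of_ne_zero hR0)).1 hsle
    · rintro a ha b hb hab ⟨hdvd, hsm⟩
      obtain ⟨R₁, -, ha2⟩ := Finset.mem_biUnion.1 ha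
      obtain ⟨s₁, hs₁, rfl⟩ := Finset.mem_image.1 ha2
      obtain ⟨R₂, -, hb2⟩ := Finset.mem_biUnion.1 hb
      obtain ⟨s₂, hs₂, rfl⟩ := Finset.mem_image.1 hb2
      obtain ⟨hs₁0, -, hs₁sm⟩ := hFmem R₁.1 R₁.2 hs₁
      obtain ⟨hs₂0, -, hs₂sm⟩ := hFmem R₂.1 R₂.2 hs₂
      obtain ⟨hR₁0, -, hR₁c⟩ := hImem R₁.2
      obtain ⟨hR₂0, -, hR₂c⟩ := hImem R₂.2
      have key := (core_iff hk (mul_ne_zero hs₁0 hR₁0) (mul_ne_zero hs₂0 hR₂0)).1 ⟨hdvd, hsm⟩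
      obtain ⟨e₁s, e₁r⟩ := decomp_eq hk hs₁sm hR₁c hs₁0 hR₁0
      obtain ⟨e₂s, e₂r⟩ := decomp_eq hk hs₂sm hR₂c hs₂0 hR₂0
      have hReq : R₁ = R₂ := Subtype.ext (by rw [← e₁r, ← e₂r]; exact key.1)
      subst hReq
      have hseq : s₁ ∣ s₂ := by rw [← e₁s, ← e₂s]; exact key.2
      have hsne : s₁ ≠ s₂ := by rintro rfl; exact hab rfl
      have hprim := ((hmemT R₁.1 _).1 (hF R₁.1 R₁.2)).2
      exact hprim s₁ hs₁ s₂ hs₂ hsne hseq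
  · -- left inverse
    intro A hA
    obtain ⟨hAsub, -⟩ := (hmemL A).1 hA
    ext m
    simp only [Finset.mem_biUnion, Finset.mem_image, Finset.mem_filter]
    constructor
    · rintro ⟨R, -, x, ⟨m', ⟨hm'A, hm'rf⟩, rfl⟩, rfl⟩
      obtain ⟨h1, h2⟩ := Finset.mem_Icc.1 (hAsub hm'A)
      have h0 : m' ≠ 0 := by omega
      rwa [← hm'rf, div_rfPart k h0, smPart_mul_rfPart k h0]
    · intro hm
      obtain ⟨h1, h2⟩ := Finset.mem_Icc.1 (hAsub hm)
      have h0 : m ≠ 0 := by omega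
      have hRI : rfPart k m ∈ I := by
        rw [hI, Finset.mem_filter, Finset.mem_Icc]
        exact ⟨⟨rfPart_pos k m, le_trans (Nat.le_of_dvd (by omega) (rfPart_dvd k h0)) h2⟩,
          coprime_rfPart hk m⟩
      refine ⟨⟨rfPart k m, hRI⟩, Finset.mem_attach _ _, m / rfPart k m, ⟨m, ⟨hm, rfl⟩, rfl⟩, ?_⟩
      rw [div_rfPart k h0, smPart_mul_rfPart k h0]
  · -- right inverse
    intro F hF
    rw [Finset.mem_pi] at hF
    have hFmem : ∀ (R : ℕ) (hR : R ∈ I) {s}, s ∈ F R hR →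
        (s ≠ 0 ∧ s ≤ n / R ∧ SmoothNat k s) := by
      intro R hR s hs
      obtain ⟨h1, -⟩ := (hmemT R _).1 (hF R hR)
      obtain ⟨h2, h3⟩ := Finset.mem_filter.1 (h1 hs)
      obtain ⟨h4, h5⟩ := Finset.mem_Icc.1 h2
      exact ⟨by omega, h5, h3⟩
    funext R hR
    ext s
    simp only [Finset.mem_image, Finset.mem_filter, Finset.mem_biUnion]
    obtain ⟨hR0, -, hRc⟩ := hImem hR
    constructor
    · rintro ⟨m, ⟨⟨R', -, s', hs', rfl⟩, hmrf⟩, rfl⟩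
      obtain ⟨hs'0, -, hs'sm⟩ := hFmem R'.1 R'.2 hs'
      obtain ⟨hR'0, -, hR'c⟩ := hImem R'.2
      obtain ⟨es, er⟩ := decomp_eq hk hs'sm hR'c hs'0 hR'0
      have hR'R : R'.1 = R := by rw [← er, hmrf]
      have hdiv : s' * R'.1 / R = s' := by
        rw [hR'R]
        exact Nat.mul_div_cancel _ (Nat.pos_of_ne_zero hR0)
      rw [hdiv]
      have hsub : R' = (⟨R, hR⟩ : {x // x ∈ I}) := Subtype.ext hR'R
      rw [hsub] at hs'
      exact hs'
    · intro hs
      obtain ⟨hs0, -, hssm⟩ := hFmem R hR hs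
      obtain ⟨es, er⟩ := decomp_eq hk hssm hRc hs0 hR0
      exact ⟨s * R, ⟨⟨⟨R, hR⟩, Finset.mem_attach _ _, s, hs, rfl⟩, er⟩,
        Nat.mul_div_cancel _ (Nat.pos_of_ne_zero hR0)⟩
end

section
/- For every n ≥ 1 and every k ≥ 2, f(n) ≤ f(n,k) ≤ 2^{⌈n/k⌉}·f(n); consequently |log₂ f(n,k)/n − log₂ f(n)/n| ≤ 1/k + 1/n for all n. -/
open Finset Filter
open scoped Classical

/-!
A primitive set is `k`-core, so `f n ≤ fk n k`. Conversely, in a `k`-core subset of `{1,…,n}`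
any two elements above `n / k` have quotient less than `k`, hence below the `k`-th prime, so the
part of the set above `n / k` is primitive. A `k`-core set is therefore determined by an
arbitrary subset of `{1,…,n/k}` together with a primitive subset of `{1,…,n}`, which gives
`fk n k ≤ 2 ^ (n / k) * f n`; taking logarithms yields the density estimate.
-/

theorem Primitive.kCore {S : Finset ℕ} (hS : Primitive S) (k : ℕ) : KCore k S :=
  fun a ha b hb hab hdvd => hS a ha b hb hab hdvd.1

theorem smoothNat_of_pos_of_le {k r : ℕ} (hr : 0 < r) (hrk : r ≤ k) : SmoothNat k r := by
  intro p _ hp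
  have := Nat.le_of_dvd hr hp
  have := Nat.add_two_le_nth_prime (k - 1)
  omega

theorem div_lt_of_div_lt_of_le {n k a b : ℕ} (hk : 0 < k) (ha : n / k < a) (hb : b ≤ n) :
    b / a < k :=
  Nat.div_lt_of_lt_mul <| calc
    b ≤ n := hb
    _ < k * (n / k + 1) := Nat.lt_mul_div_succ n hk
    _ ≤ a * k := by rw [mul_comm]; exact Nat.mul_le_mul_right k ha

theorem KCore.primitive_filter_lt {n k : ℕ} {S : Finset ℕ} (hk : 0 < k)
    (hS : S ⊆ Icc 1 n) (h : KCore k S) : Primitive (S.filter (n / k < ·)) := by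
  intro a ha b hb hab hdvd
  rw [mem_filter] at ha hb
  have hb_mem := mem_Icc.mp (hS hb.1)
  have hquot_pos : 0 < b / a := Nat.div_pos (Nat.le_of_dvd hb_mem.1 hdvd) (Nat.zero_lt_of_lt ha.2)
  have hquot_lt := div_lt_of_div_lt_of_le hk ha.2 hb_mem.2
  exact h a ha.1 b hb.1 hab ⟨hdvd, smoothNat_of_pos_of_le hquot_pos hquot_lt.le⟩

theorem Finset.card_le_card_mul_card_of_filter_mem {α : Type*} [DecidableEq α] (p : α → Prop)
    [DecidablePred p] {𝒜 ℬ 𝒞 : Finset (Finset α)} (hℬ : ∀ S ∈ 𝒜, S.filter p ∈ ℬ)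
    (h𝒞 : ∀ S ∈ 𝒜, S.filter (¬ p ·) ∈ 𝒞) : #𝒜 ≤ #ℬ * #𝒞 := by
  rw [← card_product]
  refine card_le_card_of_injOn (fun S => (S.filter p, S.filter (¬ p ·)))
    (fun S hS => mem_product.mpr ⟨hℬ S hS, h𝒞 S hS⟩) ?_
  intro S _ T _ hST
  rw [← filter_union_filter_not_eq p S, ← filter_union_filter_not_eq p T]
  simp only [Prod.ext_iff] at hST
  rw [hST.1, hST.2]

theorem f_pos (n : ℕ) : 0 < f n :=
  card_pos.mpr ⟨∅, mem_filter.mpr ⟨empty_mem_powerset _, by simp [Primitive]⟩⟩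

theorem f_le_fk (n k : ℕ) : f n ≤ fk n k :=
  card_le_card <| monotone_filter_right _ fun _ _ hS => hS.kCore k

theorem fk_le_two_pow_mul_f (n : ℕ) {k : ℕ} (hk : 0 < k) : fk n k ≤ 2 ^ (n / k) * f n := by
  have h := card_le_card_mul_card_of_filter_mem (n / k < ·)
    (𝒜 := (Icc 1 n).powerset.filter (KCore k)) (ℬ := (Icc 1 n).powerset.filter Primitive)
    (𝒞 := (Icc 1 (n / k)).powerset) ?_ ?_
  · rwa [card_powerset, Nat.card_Icc, Nat.add_sub_cancel, mul_comm] at h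
  · intro S hS
    rw [mem_filter, mem_powerset] at hS ⊢
    exact ⟨(filter_subset _ _).trans hS.1, hS.2.primitive_filter_lt hk hS.1⟩
  · intro S hS
    rw [mem_filter, mem_powerset] at hS
    rw [mem_powerset]
    intro x hx
    rw [mem_filter, not_lt] at hx
    exact mem_Icc.mpr ⟨(mem_Icc.mp (hS.1 hx.1)).1, hx.2⟩

theorem abs_logb_sub_logb_le {b x y : ℝ} {c : ℕ} (hb : 1 < b) (hx : 0 < x) (hxy : x ≤ y)
    (hy : y ≤ b ^ c * x) : |Real.logb b y - Real.logb b x| ≤ c := by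
  have hmono := Real.logb_le_logb_of_le hb hx hxy
  have hup := Real.logb_le_logb_of_le hb (hx.trans_le hxy) hy
  rw [Real.logb_mul (by positivity) hx.ne', Real.logb_pow, Real.logb_self_eq_one hb,
    mul_one] at hup
  rw [abs_of_nonneg (sub_nonneg.mpr hmono)]
  linarith

theorem natCast_ceilDiv_le (n : ℕ) {k : ℕ} (hk : 0 < k) :
    (((n + k - 1) / k : ℕ) : ℝ) ≤ n / k + 1 := by
  have h : (n + k - 1) / k * k ≤ n + k := (Nat.div_mul_le_self _ _).trans (by omega)
  rw [div_add_one (by positivity), le_div_iff₀ (by positivity)]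
  exact_mod_cast h

theorem stmt_18_general (n k : ℕ) (hk : 2 ≤ k) :
    f n ≤ fk n k ∧ fk n k ≤ 2 ^ ((n + k - 1) / k) * f n ∧
    |Real.logb 2 (fk n k) / n - Real.logb 2 (f n) / n| ≤ 1 / k + 1 / n := by
  have hk0 : 0 < k := by omega
  set c := (n + k - 1) / k
  have hlower := f_le_fk n k
  have hupper : fk n k ≤ 2 ^ c * f n :=
    (fk_le_two_pow_mul_f n hk0).trans <| Nat.mul_le_mul_right _ <|
      Nat.pow_le_pow_right two_pos <| Nat.div_le_div_right (by omega)
  refine ⟨hlower, hupper, ?_⟩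
  have hlog : |Real.logb 2 (fk n k) - Real.logb 2 (f n)| ≤ c :=
    abs_logb_sub_logb_le one_lt_two (by exact_mod_cast f_pos n) (by exact_mod_cast hlower)
      (by exact_mod_cast hupper)
  calc |Real.logb 2 (fk n k) / n - Real.logb 2 (f n) / n|
      = |Real.logb 2 (fk n k) - Real.logb 2 (f n)| / n := by rw [← sub_div, abs_div, Nat.abs_cast]
    _ ≤ ((n : ℝ) / k + 1) / n := by gcongr; exact hlog.trans (natCast_ceilDiv_le n hk0)
    _ = (n : ℝ) / n / k + 1 / n := by rw [add_div, div_right_comm]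
    _ ≤ 1 / k + 1 / n := by gcongr; exact div_self_le_one _

/-- `f(n) ≤ f(n,k) ≤ 2^{⌈n/k⌉} f(n)`, hence
`|log₂ f(n,k)/n − log₂ f(n)/n| ≤ 1/k + 1/n`. -/
theorem stmt_18 (n k : ℕ) (hn : 1 ≤ n) (hk : 2 ≤ k) :
    f n ≤ fk n k ∧ fk n k ≤ 2 ^ ((n + k - 1) / k) * f n ∧
    |Real.logb 2 (fk n k) / n - Real.logb 2 (f n) / n| ≤ 1 / k + 1 / n :=
  stmt_18_general n k hk
end
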